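/- arXiv:1412.5020 — 3 statements merged into one kernel-verified Lean document; each statement's English description precedes it below -/
import Mathlib

section
/- Let R = (R^n, {A_σ}_{σ∈Σ}, B, C) be a representation of a family of formal power series Ψ = {S_j : Σ* → R^p | j ∈ J}, i.e. S_j(σ₁⋯σ_k) = C A_{σ_k}⋯A_{σ₁} B_j for all words. If the matrix Ã = Σ_{σ∈Σ} A_σᵀ ⊗ A_σᵀ has all eigenvalues strictly inside the unit disk, then each series S_j is square summable, i.e. Σ_{w∈Σ*} ‖S_j(w)‖₂² < ∞. -/
/-!
Let `G_k = ∑_{|w| = k} A_wᵀ (Cᵀ C) A_w`. Then `∑_{|w| = k} ‖S_j(w)‖² = B_jᵀ G_k B_j`, and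
`G_{k+1} = ∑_σ A_σᵀ G_k A_σ`, i.e. `vec G_k = Ãᵏ vec (Cᵀ C)`. By Gelfand's formula the powers of
`Ã` decay geometrically when its spectral radius is below `1`, so `∑_k Ãᵏ` converges, and with it
the series of the nonnegative terms `B_jᵀ G_k B_j`.
-/

open Matrix

/-- For a word `w = σ₁⋯σ_k`, `wordProd A w = A_{σ_k} ⋯ A_{σ₁}`. -/
def wordProd {S : Type*} {n : ℕ} (A : S → Matrix (Fin n) (Fin n) ℝ) :
    List S → Matrix (Fin n) (Fin n) ℝ :=
  fun w => w.foldl (fun M σ => A σ * M) 1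

open Filter Kronecker

theorem summable_pow_of_spectralRadius_lt_one {A : Type*} [NormedRing A] [NormedAlgebra ℂ A]
    [CompleteSpace A] {a : A} (ha : spectralRadius ℂ a < 1) : Summable fun k : ℕ => a ^ k := by
  obtain ⟨ρ, hρa, hρ1⟩ := ENNReal.lt_iff_exists_nnreal_btwn.mp ha
  refine .of_norm_bounded_eventually_nat
    (summable_geometric_of_lt_one ρ.coe_nonneg (by exact_mod_cast hρ1)) ?_
  filter_upwards [(spectrum.pow_nnnorm_pow_one_div_tendsto_nhds_spectralRadius a).eventually_lt_const
    hρa, eventually_gt_atTop 0] with k hk hk0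
  rw [one_div, ENNReal.rpow_inv_lt_iff (by positivity), ENNReal.rpow_natCast] at hk
  exact_mod_cast hk.le

theorem Matrix.summable_pow_of_forall_spectrum_norm_lt_one {ι : Type*} [Fintype ι]
    [DecidableEq ι] (M : Matrix ι ι ℝ)
    (hM : ∀ μ ∈ spectrum ℂ (M.map (algebraMap ℝ ℂ)), ‖μ‖ < 1) :
    Summable fun k : ℕ => M ^ k := by
  cases isEmpty_or_nonempty ι
  · exact summable_zero.congr fun _ => Subsingleton.elim _ _
  -- Any Banach-algebra norm will do: summability only sees the (product) topology.
  let _ : NormedRing (Matrix ι ι ℂ) := Matrix.linftyOpNormedRing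
  let _ : NormedAlgebra ℂ (Matrix ι ι ℂ) := Matrix.linftyOpNormedAlgebra
  have hρ : spectralRadius ℂ (M.map (algebraMap ℝ ℂ)) < 1 := by
    simpa using spectrum.spectralRadius_lt_of_forall_lt _ (r := 1) fun μ hμ => by
      exact_mod_cast hM μ hμ
  have hsum := summable_pow_of_spectralRadius_lt_one hρ
  refine Pi.summable.mpr fun a => Pi.summable.mpr fun b => Complex.summable_ofReal.mp ?_
  have hab := Pi.summable.mp (Pi.summable.mp hsum a) b
  simp_rw [← Matrix.map_pow] at hab
  exact hab

section

variable {m n R : Type*} [Fintype n] [CommSemiring R]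

theorem Matrix.mulVec_dotProduct_mulVec_self [Fintype m] (M : Matrix m n R) (x : n → R) :
    (M *ᵥ x) ⬝ᵥ (M *ᵥ x) = x ⬝ᵥ ((Mᵀ * M) *ᵥ x) := by
  rw [← mulVec_mulVec, dotProduct_mulVec x Mᵀ, vecMul_transpose]

theorem Matrix.dotProduct_mulVec_self_eq_vec_dotProduct_vec (G : Matrix n n R) (b : n → R) :
    b ⬝ᵥ (G *ᵥ b) = vec G ⬝ᵥ vec (vecMulVec b b) := by
  simp only [dotProduct, mulVec, vec, vecMulVec, of_apply, Fintype.sum_prod_type, Finset.mul_sum]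
  rw [Finset.sum_comm]
  exact Fintype.sum_congr _ _ fun _ => Fintype.sum_congr _ _ fun _ => by ring

variable {X : Type*} [TopologicalSpace R] [IsTopologicalSemiring R]

theorem Summable.dotProduct_const {f : X → n → R} (hf : Summable f) (v : n → R) :
    Summable fun x => f x ⬝ᵥ v :=
  summable_sum fun i _ => (Pi.summable.mp hf i).mul_right (v i)

theorem Summable.matrix_mulVec_const {f : X → Matrix m n R} (hf : Summable f) (v : n → R) :
    Summable fun x => f x *ᵥ v :=
  Pi.summable.mpr fun i => (Pi.summable.mp hf i).dotProduct_const v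

end

theorem summable_list_iff_summable_sum_ofFn {α : Type*} [Fintype α] {f : List α → ℝ}
    (hf : 0 ≤ f) : Summable f ↔ Summable fun k => ∑ v : Fin k → α, f (List.ofFn v) := by
  rw [← (List.equivSigmaTuple (α := α)).symm.summable_iff, Function.comp_def,
    summable_sigma_of_nonneg fun _ => hf _]
  simp only [List.equivSigmaTuple_symm_apply, tsum_fintype]
  exact and_iff_right fun _ => .of_finite

namespace wordProd

variable {S : Type*} {n : ℕ} (A : S → Matrix (Fin n) (Fin n) ℝ)

theorem foldl_eq_mul (w : List S) (X : Matrix (Fin n) (Fin n) ℝ) :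
    w.foldl (fun M σ => A σ * M) X = w.foldl (fun M σ => A σ * M) 1 * X := by
  induction w generalizing X with
  | nil => simp
  | cons σ w ih => rw [List.foldl_cons, List.foldl_cons, ih, ih (A σ * 1), mul_one, mul_assoc]

theorem cons (σ : S) (w : List S) : wordProd A (σ :: w) = wordProd A w * A σ := by
  simp only [wordProd, List.foldl_cons, mul_one]
  exact foldl_eq_mul A w (A σ)

end wordProd

noncomputable def wordGramian {S : Type*} [Fintype S] {n : ℕ}
    (A : S → Matrix (Fin n) (Fin n) ℝ) (X : Matrix (Fin n) (Fin n) ℝ) (k : ℕ) :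
    Matrix (Fin n) (Fin n) ℝ :=
  ∑ v : Fin k → S, (wordProd A (List.ofFn v))ᵀ * X * wordProd A (List.ofFn v)

namespace wordGramian

variable {S : Type*} [Fintype S] {n : ℕ} (A : S → Matrix (Fin n) (Fin n) ℝ)
  (X : Matrix (Fin n) (Fin n) ℝ)

@[simp]
theorem zero : wordGramian A X 0 = X := by simp [wordGramian, wordProd]

theorem succ (k : ℕ) :
    wordGramian A X (k + 1) = ∑ σ : S, (A σ)ᵀ * wordGramian A X k * A σ := by
  rw [wordGramian, ← (Fin.consEquiv fun _ => S).sum_comp, Fintype.sum_prod_type]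
  refine Finset.sum_congr rfl fun σ _ => ?_
  simp only [wordGramian, Finset.mul_sum, Finset.sum_mul, Fin.consEquiv_apply, List.ofFn_succ,
    Fin.cons_zero, Fin.cons_succ, wordProd.cons, transpose_mul, mul_assoc]

theorem vec_eq_pow_mulVec (k : ℕ) :
    vec (wordGramian A X k) = (∑ σ : S, (A σ)ᵀ ⊗ₖ (A σ)ᵀ) ^ k *ᵥ vec X := by
  induction k with
  | zero => simp
  | succ k ih =>
    rw [succ, pow_succ', ← mulVec_mulVec, ← ih, sum_mulVec, vec_sum]
    simp only [kronecker_mulVec_vec, transpose_transpose]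

theorem dotProduct_mulVec_transpose_mul_self {p : ℕ} (C : Matrix (Fin p) (Fin n) ℝ)
    (b : Fin n → ℝ) (k : ℕ) :
    b ⬝ᵥ (wordGramian A (Cᵀ * C) k *ᵥ b) =
      ∑ v : Fin k → S, (C *ᵥ (wordProd A (List.ofFn v) *ᵥ b)) ⬝ᵥ
        (C *ᵥ (wordProd A (List.ofFn v) *ᵥ b)) := by
  simp only [wordGramian, sum_mulVec, dotProduct_sum, mulVec_mulVec,
    mulVec_dotProduct_mulVec_self, transpose_mul, Matrix.mul_assoc]

end wordGramian

theorem squareSummable_of_stable_representation_general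
    {n p : ℕ} {S : Type*} [Fintype S] {J : Type*}
    (A : S → Matrix (Fin n) (Fin n) ℝ) (B : J → (Fin n → ℝ))
    (C : Matrix (Fin p) (Fin n) ℝ)
    (Ser : J → List S → (Fin p → ℝ))
    (hrep : ∀ j w, Ser j w = C *ᵥ ((wordProd A w) *ᵥ B j))
    (hstab : ∀ μ : ℂ,
      μ ∈ spectrum ℂ
        ((∑ σ : S, Matrix.kroneckerMap (· * ·) (A σ)ᵀ (A σ)ᵀ).map
          (algebraMap ℝ ℂ)) →
      ‖μ‖ < 1)
    (j : J) :
    Summable (fun w : List S => ∑ i : Fin p, (Ser j w i) ^ 2) := by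
  set T := ∑ σ : S, (A σ)ᵀ ⊗ₖ (A σ)ᵀ
  have hT : Summable fun k => T ^ k := T.summable_pow_of_forall_spectrum_norm_lt_one hstab
  have hlength : ∀ k, ∑ v : Fin k → S, ∑ i, (Ser j (List.ofFn v) i) ^ 2 =
      (T ^ k *ᵥ vec (Cᵀ * C)) ⬝ᵥ vec (vecMulVec (B j) (B j)) := by
    intro k
    rw [← wordGramian.vec_eq_pow_mulVec, ← dotProduct_mulVec_self_eq_vec_dotProduct_vec,
      wordGramian.dotProduct_mulVec_transpose_mul_self]
    simp only [hrep, dotProduct, sq]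
  refine (summable_list_iff_summable_sum_ofFn fun w => by positivity).mpr ?_
  simpa only [hlength] using (hT.matrix_mulVec_const _).dotProduct_const _

theorem squareSummable_of_stable_representation
    {n p : ℕ} {S : Type*} [Fintype S] {J : Type*} [Fintype J]
    (A : S → Matrix (Fin n) (Fin n) ℝ) (B : J → (Fin n → ℝ))
    (C : Matrix (Fin p) (Fin n) ℝ)
    (Ser : J → List S → (Fin p → ℝ))
    (hrep : ∀ j w, Ser j w = C *ᵥ ((wordProd A w) *ᵥ B j))
    (hstab : ∀ μ : ℂ,
      μ ∈ spectrum ℂ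
        ((∑ σ : S, Matrix.kroneckerMap (· * ·) (A σ)ᵀ (A σ)ᵀ).map
          (algebraMap ℝ ℂ)) →
      ‖μ‖ < 1)
    (j : J) :
    Summable (fun w : List S => ∑ i : Fin p, (Ser j w i) ^ 2) :=
  squareSummable_of_stable_representation_general A B C Ser hrep hstab j
end

section
/- Let R = (R^n, {A_σ}_{σ∈Σ}, B, C) be a reachable and observable representation of a family of formal power series Ψ = {S_j | j ∈ J}. If every S_j is square summable, then all eigenvalues of the matrix Ã = Σ_{σ∈Σ} A_σᵀ ⊗ A_σᵀ lie strictly inside the unit disk. -/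
open Matrix

/-!
For a functional `φ` and a state `x`, call the pair square summable when `w ↦ φ (A_w x)` is in
`ℓ²`. This is a linear condition in each of `φ` and `x`, and it is invariant under `x ↦ A_u x`
and `φ ↦ φ ∘ A_u`, since these only reindex the family by the injective maps `w ↦ u ++ w` and
`w ↦ w ++ u`. Square summability of the series says that the pairs `(C_k, B_j)` are square
summable; reachability spreads this to all `(C_k, x)`, and observability, which says that the
functionals `C_k ∘ A_u` span the dual space, to all pairs. So every entry `w ↦ (A_w)_{ab}` is in
`ℓ²`. An entry of `Ã^k` is a sum over the words of length `k` of products of two such entries;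
these products are summable over all words, so `Ã^k → 0`, and for an eigenvector `v` of `Ã`
with eigenvalue `μ` this forces `μ^k v = Ã^k v → 0`, i.e. `|μ| < 1`.
-/

open Filter Topology Kronecker

section Memℓp

variable {α β : Type*} {E : Type*} [NormedAddCommGroup E] {p : ENNReal}

theorem Memℓp.comp_injective {f : α → E} (hf : Memℓp f p) (hp : 0 < p.toReal) {g : β → α}
    (hg : g.Injective) : Memℓp (f ∘ g) p :=
  memℓp_gen ((hf.summable hp).comp_injective hg)

theorem memℓp_two_iff_summable_sq {f : α → ℝ} : Memℓp f 2 ↔ Summable fun i => f i ^ 2 := by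
  simp [memℓp_gen_iff (p := 2) (by norm_num), Real.norm_eq_abs]

theorem Memℓp.summable_mul {f g : α → ℝ} (hf : Memℓp f 2) (hg : Memℓp g 2) :
    Summable fun i => f i * g i := by
  have h := hf.holder 1 hg (fun _ => ContinuousLinearMap.mul ℝ ℝ) fun _ =>
    ContinuousLinearMap.opNorm_mul_le ℝ ℝ
  exact .of_norm <| by simpa [memℓp_gen_iff (p := 1) (by norm_num), abs_mul] using h

end Memℓp

theorem Summable.tendsto_sum_ofFn_atTop_zero {S E : Type*} [Fintype S] [NormedAddCommGroup E] [CompleteSpace E]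
    {g : List S → E} (hg : Summable g) :
    Tendsto (fun k => ∑ f : Fin k → S, g (List.ofFn f)) atTop (𝓝 0) := by
  have := (hg.comp_injective List.equivSigmaTuple.symm.injective).sigma
  simpa [tsum_fintype] using this.tendsto_atTop_zero

theorem norm_lt_one_of_mem_spectrum_of_tendsto_pow {𝕜 ι : Type*} [NormedField 𝕜] [Fintype ι]
    [DecidableEq ι] {M : Matrix ι ι 𝕜} (hM : Tendsto (M ^ ·) atTop (𝓝 0)) {μ : 𝕜}
    (hμ : μ ∈ spectrum 𝕜 M) : ‖μ‖ < 1 := by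
  rw [← spectrum_toLin', ← Module.End.hasEigenvalue_iff_mem_spectrum] at hμ
  obtain ⟨v, hv⟩ := hμ.exists_hasEigenvector
  obtain ⟨i, hi⟩ := Function.ne_iff.mp hv.2
  have hpow : ∀ k : ℕ, (M ^ k *ᵥ v) i = μ ^ k * v i := by
    intro k
    induction k with
    | zero => simp
    | succ k ih =>
      rw [pow_succ, ← mulVec_mulVec, ← toLin'_apply M v, hv.apply_eq_smul, mulVec_smul,
        Pi.smul_apply, ih, smul_eq_mul, pow_succ]; ring
  have hlim : Tendsto (fun k => μ ^ k * v i) atTop (𝓝 0) := by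
    simp_rw [← hpow]
    have hcont : Continuous fun N : Matrix ι ι 𝕜 => (N *ᵥ v) i :=
      (continuous_apply i).comp (continuous_id.matrix_mulVec continuous_const)
    simpa [Function.comp_def] using (hcont.tendsto 0).comp hM
  refine tendsto_pow_atTop_nhds_zero_iff_norm_lt_one.mp ?_
  simpa [mul_inv_cancel_right₀ hi] using hlim.mul_const (v i)⁻¹

theorem norm_lt_one_of_mem_spectrum_map_of_tendsto_pow {ι : Type*} [Fintype ι] [DecidableEq ι]
    {M : Matrix ι ι ℝ} (hM : Tendsto (M ^ ·) atTop (𝓝 0)) {μ : ℂ}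
    (hμ : μ ∈ spectrum ℂ (M.map (algebraMap ℝ ℂ))) : ‖μ‖ < 1 := by
  refine norm_lt_one_of_mem_spectrum_of_tendsto_pow ?_ hμ
  have hmap : Continuous fun N : Matrix ι ι ℝ => N.map (algebraMap ℝ ℂ) :=
    continuous_id.matrix_map (continuous_algebraMap ℝ ℂ)
  have hpow (k : ℕ) : M.map (algebraMap ℝ ℂ) ^ k = (M ^ k).map (algebraMap ℝ ℂ) :=
    (map_pow (algebraMap ℝ ℂ).mapMatrix M k).symm
  simp_rw [hpow]
  simpa [Function.comp_def] using (hmap.tendsto 0).comp hM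

section WordProd

variable {S : Type*} {n : ℕ} (A : S → Matrix (Fin n) (Fin n) ℝ)

theorem foldl_eq_wordProd_mul (w : List S) (M : Matrix (Fin n) (Fin n) ℝ) :
    w.foldl (fun M σ => A σ * M) M = wordProd A w * M := by
  induction w generalizing M with
  | nil => simp [wordProd]
  | cons σ w ih =>
    rw [List.foldl_cons, ih]
    show _ = List.foldl _ 1 (σ :: w) * M
    rw [List.foldl_cons, ih, mul_one, mul_assoc]

theorem wordProd_append (w u : List S) : wordProd A (w ++ u) = wordProd A u * wordProd A w := by
  show List.foldl _ 1 (w ++ u) = _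
  rw [List.foldl_append, foldl_eq_wordProd_mul]
  rfl

theorem wordProd_cons (σ : S) (w : List S) : wordProd A (σ :: w) = wordProd A w * A σ := by
  simpa [wordProd] using wordProd_append A [σ] w

theorem sum_kronecker_transpose_pow [Fintype S] (k : ℕ) :
    (∑ σ, (A σ)ᵀ ⊗ₖ (A σ)ᵀ) ^ k =
      ∑ f : Fin k → S, (wordProd A (List.ofFn f))ᵀ ⊗ₖ (wordProd A (List.ofFn f))ᵀ := by
  induction k with
  | zero => simp [wordProd]
  | succ k ih =>
    rw [pow_succ', ih, Finset.sum_mul_sum, ← Fintype.sum_prod_type']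
    refine Fintype.sum_equiv (Fin.consEquiv fun _ => S) _ _ fun ⟨σ, f⟩ => ?_
    rw [← mul_kronecker_mul, ← transpose_mul]
    change _ = (wordProd A (List.ofFn (Fin.cons σ f)))ᵀ ⊗ₖ (wordProd A (List.ofFn (Fin.cons σ f)))ᵀ
    rw [List.ofFn_cons, wordProd_cons]

end WordProd

section SquareSummable

variable {S : Type*} {n : ℕ} (A : S → Matrix (Fin n) (Fin n) ℝ)

def sqSummableStates (φ : Module.Dual ℝ (Fin n → ℝ)) : Submodule ℝ (Fin n → ℝ) where
  carrier := {x | Memℓp (fun w => φ (wordProd A w *ᵥ x)) 2}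
  add_mem' {x y} hx hy := by
    change Memℓp (fun w => φ (wordProd A w *ᵥ (x + y))) 2
    simp only [mulVec_add, map_add]
    exact hx.add hy
  zero_mem' := by
    change Memℓp (fun w => φ (wordProd A w *ᵥ 0)) 2
    simp only [mulVec_zero, map_zero]
    exact zero_mem_ℓp'
  smul_mem' c x hx := by
    change Memℓp (fun w => φ (wordProd A w *ᵥ (c • x))) 2
    simp only [mulVec_smul, map_smul]
    exact hx.const_smul c

def sqSummableFunctionals (x : Fin n → ℝ) : Submodule ℝ (Module.Dual ℝ (Fin n → ℝ)) where
  carrier := {φ | Memℓp (fun w => φ (wordProd A w *ᵥ x)) 2}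
  add_mem' hφ hψ := hφ.add hψ
  zero_mem' := zero_memℓp
  smul_mem' c _ hφ := hφ.const_smul c

variable {A}

theorem mem_sqSummableFunctionals_iff {x : Fin n → ℝ} {φ : Module.Dual ℝ (Fin n → ℝ)} :
    φ ∈ sqSummableFunctionals A x ↔ x ∈ sqSummableStates A φ :=
  Iff.rfl

theorem mulVec_mem_sqSummableStates {φ : Module.Dual ℝ (Fin n → ℝ)} {x : Fin n → ℝ}
    (hx : x ∈ sqSummableStates A φ) (u : List S) :
    wordProd A u *ᵥ x ∈ sqSummableStates A φ := by
  change Memℓp (fun w => φ (wordProd A w *ᵥ wordProd A u *ᵥ x)) 2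
  simp only [mulVec_mulVec, ← wordProd_append]
  exact hx.comp_injective (by norm_num) (List.append_right_injective u)

theorem comp_mem_sqSummableFunctionals {x : Fin n → ℝ} {φ : Module.Dual ℝ (Fin n → ℝ)}
    (hφ : φ ∈ sqSummableFunctionals A x) (u : List S) :
    φ ∘ₗ (wordProd A u).mulVecLin ∈ sqSummableFunctionals A x := by
  change Memℓp (fun w => φ (wordProd A u *ᵥ wordProd A w *ᵥ x)) 2
  simp only [mulVec_mulVec, ← wordProd_append]
  exact hφ.comp_injective (by norm_num) (List.append_left_injective u)

theorem sqSummableStates_eq_top {J : Type*} {B : J → Fin n → ℝ}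
    (hreach : Submodule.span ℝ {v | ∃ (w : List S) (j : J), v = wordProd A w *ᵥ B j} = ⊤)
    {φ : Module.Dual ℝ (Fin n → ℝ)} (hB : ∀ j, B j ∈ sqSummableStates A φ) :
    sqSummableStates A φ = ⊤ := by
  rw [eq_top_iff, ← hreach, Submodule.span_le]
  rintro _ ⟨w, j, rfl⟩
  exact mulVec_mem_sqSummableStates (hB j) w

theorem span_output_functionals_eq_top {p : ℕ} {C : Matrix (Fin p) (Fin n) ℝ}
    (hobs : ∀ x, (∀ w : List S, C *ᵥ (wordProd A w *ᵥ x) = 0) → x = 0) :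
    Submodule.span ℝ {φ | ∃ (u : List S) (k : Fin p),
      φ = (LinearMap.proj k ∘ₗ C.mulVecLin) ∘ₗ (wordProd A u).mulVecLin} = ⊤ := by
  set W := Submodule.span ℝ {φ | ∃ (u : List S) (k : Fin p),
      φ = (LinearMap.proj k ∘ₗ C.mulVecLin) ∘ₗ (wordProd A u).mulVecLin}
  have hW : W.dualCoannihilator = ⊥ := by
    refine (Submodule.eq_bot_iff _).mpr fun x hx => hobs x fun w => funext fun k => ?_
    exact (Submodule.mem_dualCoannihilator x).mp hx _ (Submodule.subset_span ⟨w, k, rfl⟩)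
  rw [← Subspace.dualCoannihilator_dualAnnihilator_eq (W := W), hW,
    Submodule.dualAnnihilator_bot]

theorem sqSummableFunctionals_eq_top {p : ℕ} {C : Matrix (Fin p) (Fin n) ℝ}
    (hobs : ∀ x, (∀ w : List S, C *ᵥ (wordProd A w *ᵥ x) = 0) → x = 0) {x : Fin n → ℝ}
    (hC : ∀ k, LinearMap.proj k ∘ₗ C.mulVecLin ∈ sqSummableFunctionals A x) :
    sqSummableFunctionals A x = ⊤ := by
  rw [eq_top_iff, ← span_output_functionals_eq_top hobs, Submodule.span_le]
  rintro _ ⟨u, k, rfl⟩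
  exact comp_mem_sqSummableFunctionals (hC k) u

end SquareSummable

variable {S : Type*} {n : ℕ} {A : S → Matrix (Fin n) (Fin n) ℝ} in
theorem tendsto_sum_kronecker_transpose_pow_zero [Fintype S]
    (hA : ∀ a b, Memℓp (fun w => wordProd A w a b) 2) :
    Tendsto (fun k => (∑ σ, (A σ)ᵀ ⊗ₖ (A σ)ᵀ) ^ k) atTop (𝓝 0) := by
  refine tendsto_pi_nhds.mpr fun a => tendsto_pi_nhds.mpr fun b => ?_
  simp only [sum_kronecker_transpose_pow, Matrix.sum_apply, kroneckerMap_apply, transpose_apply]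
  exact ((hA b.1 a.1).summable_mul (hA b.2 a.2)).tendsto_sum_ofFn_atTop_zero

theorem stable_of_squareSummable_minimal_representation_general
    {n p : ℕ} {S : Type*} [Fintype S] {J : Type*}
    (A : S → Matrix (Fin n) (Fin n) ℝ) (B : J → (Fin n → ℝ))
    (C : Matrix (Fin p) (Fin n) ℝ)
    (Ser : J → List S → (Fin p → ℝ))
    (hrep : ∀ j w, Ser j w = C *ᵥ ((wordProd A w) *ᵥ B j))
    (hreach : Submodule.span ℝ
      {v : Fin n → ℝ | ∃ (w : List S) (j : J), v = (wordProd A w) *ᵥ B j} = ⊤)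
    (hobs : ∀ x : Fin n → ℝ,
      (∀ w : List S, C *ᵥ ((wordProd A w) *ᵥ x) = 0) → x = 0)
    (hsummable : ∀ j : J, Summable (fun w : List S => ∑ i : Fin p, (Ser j w i) ^ 2)) :
    ∀ μ : ℂ,
      μ ∈ spectrum ℂ
        ((∑ σ : S, Matrix.kroneckerMap (· * ·) (A σ)ᵀ (A σ)ᵀ).map
          (algebraMap ℝ ℂ)) →
      ‖μ‖ < 1 := by
  have houtput : ∀ k j, B j ∈ sqSummableStates A (LinearMap.proj k ∘ₗ C.mulVecLin) := by
    intro k j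
    refine memℓp_two_iff_summable_sq.mpr <|
      (hsummable j).of_nonneg_of_le (fun _ => sq_nonneg _) fun w => ?_
    simpa [hrep] using Finset.single_le_sum (fun i _ => sq_nonneg (Ser j w i)) (Finset.mem_univ k)
  have hall : ∀ x, sqSummableFunctionals A x = ⊤ := fun x =>
    sqSummableFunctionals_eq_top hobs fun k => mem_sqSummableFunctionals_iff.mpr <|
      Submodule.eq_top_iff'.mp (sqSummableStates_eq_top hreach (houtput k)) x
  have hentries : ∀ a b, Memℓp (fun w => wordProd A w a b) 2 := fun a b => by
    have h : Memℓp (fun w => (wordProd A w *ᵥ Pi.single b 1) a) 2 :=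
      Submodule.eq_top_iff'.mp (hall (Pi.single b 1)) (LinearMap.proj a)
    simpa [mulVec_single_one] using h
  exact fun μ => norm_lt_one_of_mem_spectrum_map_of_tendsto_pow
    (tendsto_sum_kronecker_transpose_pow_zero hentries)

theorem stable_of_squareSummable_minimal_representation
    {n p : ℕ} {S : Type*} [Fintype S] {J : Type*} [Fintype J]
    (A : S → Matrix (Fin n) (Fin n) ℝ) (B : J → (Fin n → ℝ))
    (C : Matrix (Fin p) (Fin n) ℝ)
    (Ser : J → List S → (Fin p → ℝ))
    (hrep : ∀ j w, Ser j w = C *ᵥ ((wordProd A w) *ᵥ B j))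
    (hreach : Submodule.span ℝ
      {v : Fin n → ℝ | ∃ (w : List S) (j : J), v = (wordProd A w) *ᵥ B j} = ⊤)
    (hobs : ∀ x : Fin n → ℝ,
      (∀ w : List S, C *ᵥ ((wordProd A w) *ᵥ x) = 0) → x = 0)
    (hsummable : ∀ j : J, Summable (fun w : List S => ∑ i : Fin p, (Ser j w i) ^ 2)) :
    ∀ μ : ℂ,
      μ ∈ spectrum ℂ
        ((∑ σ : S, Matrix.kroneckerMap (· * ·) (A σ)ᵀ (A σ)ᵀ).map
          (algebraMap ℝ ℂ)) →
      ‖μ‖ < 1 :=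
  stable_of_squareSummable_minimal_representation_general A B C Ser hrep hreach hobs hsummable
end

section
/- Let Z : R^{n×n} → R^{n×n} be the linear map Z(V) = Σ_{σ∈Σ} p_σ A_σ V A_σᵀ with p_σ > 0, and suppose 1 is not an eigenvalue of Z. Suppose two families {P_σ}_{σ∈Σ} and {P'_σ}_{σ∈Σ} of n×n matrices both satisfy P_σ = p_σ Σ_{σ₁ : σ₁σ ∈ L} (A_{σ₁} P_{σ₁} A_{σ₁}ᵀ + K_{σ₁} Q_{σ₁} K_{σ₁}ᵀ) for all σ ∈ Σ, where additionally A_σ A_{σ₁} = 0 whenever σ₁σ ∉ L. Then P_σ = P'_σ for all σ ∈ Σ. -/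
open Matrix

theorem lyapunov_like_equation_unique_solution
    {n m : ℕ} {S : Type*} [Fintype S]
    (p : S → ℝ) (hp : ∀ σ, 0 < p σ)
    (A : S → Matrix (Fin n) (Fin n) ℝ)
    (K : S → Matrix (Fin n) (Fin m) ℝ)
    (Q : S → Matrix (Fin m) (Fin m) ℝ)
    (L : S → S → Prop) [∀ σ₁ σ, Decidable (L σ₁ σ)]
    (hA : ∀ σ₁ σ, ¬ L σ₁ σ → A σ * A σ₁ = 0)
    (hone : ∀ V : Matrix (Fin n) (Fin n) ℝ,
      (∑ σ : S, p σ • (A σ * V * (A σ)ᵀ)) = V → V = 0)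
    (P P' : S → Matrix (Fin n) (Fin n) ℝ)
    (hP : ∀ σ, P σ = p σ •
      ∑ σ₁ ∈ Finset.univ.filter (fun σ₁ => L σ₁ σ),
        (A σ₁ * P σ₁ * (A σ₁)ᵀ + K σ₁ * Q σ₁ * (K σ₁)ᵀ))
    (hP' : ∀ σ, P' σ = p σ •
      ∑ σ₁ ∈ Finset.univ.filter (fun σ₁ => L σ₁ σ),
        (A σ₁ * P' σ₁ * (A σ₁)ᵀ + K σ₁ * Q σ₁ * (K σ₁)ᵀ)) :
    ∀ σ, P σ = P' σ := by
  set D : S → Matrix (Fin n) (Fin n) ℝ := fun σ => P σ - P' σ with hDdef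
  have hD : ∀ σ, D σ = p σ •
      ∑ σ₁ ∈ Finset.univ.filter (fun σ₁ => L σ₁ σ),
        (A σ₁ * D σ₁ * (A σ₁)ᵀ) := by
    intro σ
    have : D σ = P σ - P' σ := rfl
    rw [this, hP σ, hP' σ, ← smul_sub, ← Finset.sum_sub_distrib]
    congr 1
    apply Finset.sum_congr rfl
    intro σ₁ _
    simp [hDdef, Matrix.mul_sub, Matrix.sub_mul]
  set V : Matrix (Fin n) (Fin n) ℝ := ∑ σ₁, A σ₁ * D σ₁ * (A σ₁)ᵀ with hVdef
  -- extending a filtered sandwiched sum to the full one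
  have key : ∀ σ, A σ * (∑ σ₁ ∈ Finset.univ.filter (fun σ₁ => L σ₁ σ),
      (A σ₁ * D σ₁ * (A σ₁)ᵀ)) * (A σ)ᵀ = A σ * V * (A σ)ᵀ := by
    intro σ
    rw [hVdef, Matrix.mul_sum, Matrix.sum_mul, Matrix.mul_sum, Matrix.sum_mul]
    refine Finset.sum_subset (Finset.filter_subset _ _) ?_
    intro σ₁ _ hσ₁
    rw [Finset.mem_filter] at hσ₁
    push_neg at hσ₁
    have h0 : A σ * A σ₁ = 0 := hA σ₁ σ (hσ₁ (Finset.mem_univ σ₁))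
    have : A σ * (A σ₁ * D σ₁ * (A σ₁)ᵀ) = 0 := by
      rw [show A σ₁ * D σ₁ * (A σ₁)ᵀ = A σ₁ * (D σ₁ * (A σ₁)ᵀ) by
        rw [Matrix.mul_assoc], ← Matrix.mul_assoc, h0, Matrix.zero_mul]
    rw [this, Matrix.zero_mul]
  have hV0 : V = 0 := by
    apply hone
    calc ∑ σ, p σ • (A σ * V * (A σ)ᵀ)
        = ∑ σ, A σ * D σ * (A σ)ᵀ := by
          apply Finset.sum_congr rfl
          intro σ _
          rw [← key σ, ← Matrix.smul_mul, ← Matrix.mul_smul, ← hD σ]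
      _ = V := hVdef.symm
  have hterm : ∀ σ, A σ * D σ * (A σ)ᵀ = 0 := by
    intro σ
    rw [hD σ, Matrix.mul_smul, Matrix.smul_mul, key σ, hV0]
    simp
  have hDzero : ∀ σ, D σ = 0 := by
    intro σ
    rw [hD σ]
    rw [Finset.sum_congr rfl (fun σ₁ _ => hterm σ₁)]
    simp
  intro σ
  have := hDzero σ
  have : P σ - P' σ = 0 := this
  exact sub_eq_zero.mp this
end
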